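/- arXiv:1904.10930 — 8 statements merged into one kernel-verified Lean document; each statement's English description precedes it below -/
import Mathlib

section
/- Let H₁, H₂ : ℝ² → ℝ be smooth positive functions, ε ∈ {0,1,-1}, c > 0, and assume H₂² + εH₁² > 0. Define φ := √(H₂² + εH₁²)/(√c·H₁H₂). Then φ satisfies the equation ∂_x∂_y φ + (∂_y ln H₁)(∂_x φ) + (∂_x ln H₂)(∂_y φ) + φ·∂_x∂_y ln(H₁H₂) = 0 if and only if the function θ := √(H₂² + εH₁²) satisfies the point equation ∂_x∂_y θ = (∂_y ln H₁)(∂_x θ) + (∂_x ln H₂)(∂_y θ). -/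
noncomputable def px (f : ℝ × ℝ → ℝ) (p : ℝ × ℝ) : ℝ := fderiv ℝ f p (1, 0)
noncomputable def py (f : ℝ × ℝ → ℝ) (p : ℝ × ℝ) : ℝ := fderiv ℝ f p (0, 1)
noncomputable def pxy (f : ℝ × ℝ → ℝ) (p : ℝ × ℝ) : ℝ := px (py f) p

section aux

variable {f g : ℝ × ℝ → ℝ} {v p : ℝ × ℝ}

private lemma contDiff_pd (hf : ContDiff ℝ (⊤ : ℕ∞) f) (v : ℝ × ℝ) :
    ContDiff ℝ (⊤ : ℕ∞) (fun p => fderiv ℝ f p v) := by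
  have h1 : ContDiff ℝ (⊤ : ℕ∞) (fderiv ℝ f) := hf.fderiv_right (by simp)
  exact (ContinuousLinearMap.apply ℝ ℝ v).contDiff.comp h1

private lemma pd_add (hf : Differentiable ℝ f) (hg : Differentiable ℝ g) :
    fderiv ℝ (fun q => f q + g q) p v = fderiv ℝ f p v + fderiv ℝ g p v := by
  rw [fderiv_fun_add (hf p) (hg p)]; simp

private lemma pd_mul (hf : Differentiable ℝ f) (hg : Differentiable ℝ g) :
    fderiv ℝ (fun q => f q * g q) p v
      = fderiv ℝ f p v * g p + f p * fderiv ℝ g p v := by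
  rw [fderiv_fun_mul (hf p) (hg p)]; simp; ring

private lemma pd_neg :
    fderiv ℝ (fun q => -f q) p v = -fderiv ℝ f p v := by
  rw [fderiv_fun_neg]; simp

private lemma pd_inv (hf : Differentiable ℝ f) (h0 : f p ≠ 0) :
    fderiv ℝ (fun q => (f q)⁻¹) p v = -(fderiv ℝ f p v) / (f p) ^ 2 := by
  have h := (hasFDerivAt_inv h0).comp p (hf p).hasFDerivAt
  have h2 : (fun q => (f q)⁻¹) = (fun x => x⁻¹) ∘ f := rfl
  rw [h2, h.fderiv]
  simp [div_eq_mul_inv]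

private lemma pd_log (hf : Differentiable ℝ f) (h0 : f p ≠ 0) :
    fderiv ℝ (fun q => Real.log (f q)) p v = fderiv ℝ f p v / f p := by
  rw [((hf p).hasFDerivAt.log h0).fderiv]
  simp [div_eq_mul_inv, mul_comm]

private lemma pd_sqrt (hf : Differentiable ℝ f) (h0 : f p ≠ 0) :
    fderiv ℝ (fun q => Real.sqrt (f q)) p v
      = fderiv ℝ f p v / (2 * Real.sqrt (f p)) := by
  rw [((hf p).hasFDerivAt.sqrt h0).fderiv]
  simp [div_eq_mul_inv, mul_comm]

private lemma pd_const_mul (a : ℝ) (hf : Differentiable ℝ f) :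
    fderiv ℝ (fun q => a * f q) p v = a * fderiv ℝ f p v := by
  have := pd_mul (f := fun _ => a) (g := f) (differentiable_const a) hf (p := p) (v := v)
  simpa using this

end aux

/-- φ solves Eisenhart's equation iff √(H₂²+εH₁²) solves the point equation. -/
theorem stmt_1 (H₁ H₂ : ℝ × ℝ → ℝ) (ε c : ℝ)
    (hH₁ : ContDiff ℝ (⊤ : ℕ∞) H₁) (hH₂ : ContDiff ℝ (⊤ : ℕ∞) H₂)
    (hε : ε = 0 ∨ ε = 1 ∨ ε = -1) (hc : 0 < c)
    (hH₁pos : ∀ p, 0 < H₁ p) (hH₂pos : ∀ p, 0 < H₂ p)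
    (hpos : ∀ p, 0 < H₂ p ^ 2 + ε * H₁ p ^ 2)
    (φ : ℝ × ℝ → ℝ)
    (hφ : φ = fun p => Real.sqrt (H₂ p ^ 2 + ε * H₁ p ^ 2) / (Real.sqrt c * H₁ p * H₂ p))
    (θ : ℝ × ℝ → ℝ)
    (hθ : θ = fun p => Real.sqrt (H₂ p ^ 2 + ε * H₁ p ^ 2)) :
    (∀ p, pxy φ p
        + py (fun q => Real.log (H₁ q)) p * px φ p
        + px (fun q => Real.log (H₂ q)) p * py φ p
        + φ p * pxy (fun q => Real.log (H₁ q * H₂ q)) p = 0)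
    ↔ (∀ p, pxy θ p
        = py (fun q => Real.log (H₁ q)) p * px θ p
        + px (fun q => Real.log (H₂ q)) p * py θ p) := by
  -- basic nonvanishing
  have h1ne : ∀ p, H₁ p ≠ 0 := fun p => (hH₁pos p).ne'
  have h2ne : ∀ p, H₂ p ≠ 0 := fun p => (hH₂pos p).ne'
  have hd1 : Differentiable ℝ H₁ := hH₁.differentiable (by simp)
  have hd2 : Differentiable ℝ H₂ := hH₂.differentiable (by simp)
  -- names
  set S : ℝ × ℝ → ℝ := fun q => H₂ q ^ 2 + ε * H₁ q ^ 2 with hS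
  set D : ℝ × ℝ → ℝ := fun q => Real.sqrt c * H₁ q * H₂ q with hD
  set g : ℝ × ℝ → ℝ := fun q => (D q)⁻¹ with hg
  set L₁ : ℝ × ℝ → ℝ := fun q => Real.log (H₁ q) with hL₁
  set L₂ : ℝ × ℝ → ℝ := fun q => Real.log (H₂ q) with hL₂
  have hSpos : ∀ q, 0 < S q := hpos
  have hSne : ∀ q, S q ≠ 0 := fun q => (hSpos q).ne'
  have hsc : (0:ℝ) < Real.sqrt c := Real.sqrt_pos.2 hc
  have hDpos : ∀ q, 0 < D q := fun q => by
    have := hH₁pos q; have := hH₂pos q; positivity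
  have hDne : ∀ q, D q ≠ 0 := fun q => (hDpos q).ne'
  -- smoothness
  have hSsm : ContDiff ℝ (⊤ : ℕ∞) S := by
    exact (hH₂.pow 2).add (contDiff_const.mul (hH₁.pow 2))
  have hθsm : ContDiff ℝ (⊤ : ℕ∞) θ := by
    rw [hθ]; exact hSsm.sqrt hSne
  have hDsm : ContDiff ℝ (⊤ : ℕ∞) D := (contDiff_const.mul hH₁).mul hH₂
  have hgsm : ContDiff ℝ (⊤ : ℕ∞) g := hDsm.inv hDne
  have hL₁sm : ContDiff ℝ (⊤ : ℕ∞) L₁ := hH₁.log h1ne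
  have hL₂sm : ContDiff ℝ (⊤ : ℕ∞) L₂ := hH₂.log h2ne
  have hdθ : Differentiable ℝ θ := hθsm.differentiable (by simp)
  have hdS : Differentiable ℝ S := hSsm.differentiable (by simp)
  have hdD : Differentiable ℝ D := hDsm.differentiable (by simp)
  have hdg : Differentiable ℝ g := hgsm.differentiable (by simp)
  have hdL₁ : Differentiable ℝ L₁ := hL₁sm.differentiable (by simp)
  have hdL₂ : Differentiable ℝ L₂ := hL₂sm.differentiable (by simp)
  have hφθg : φ = fun q => θ q * g q := by
    rw [hφ, hθ, hg, hD]; funext q; rw [div_eq_mul_inv]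
  have hθval : ∀ q, θ q = Real.sqrt (S q) := fun q => congrFun hθ q
  have hθpos : ∀ q, 0 < θ q := fun q => by
    rw [hθval]; exact Real.sqrt_pos.2 (hSpos q)
  have hθsq : ∀ q, θ q ^ 2 = S q := fun q => by
    rw [hθval]; exact Real.sq_sqrt (hSpos q).le
  -- generic derivative v ∈ {(1,0),(0,1)} facts, phrased for arbitrary v
  have pdL₁ : ∀ v p, fderiv ℝ L₁ p v = fderiv ℝ H₁ p v / H₁ p := fun v p => by
    rw [hL₁]; exact pd_log hd1 (h1ne p)
  have pdL₂ : ∀ v p, fderiv ℝ L₂ p v = fderiv ℝ H₂ p v / H₂ p := fun v p => by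
    rw [hL₂]; exact pd_log hd2 (h2ne p)
  have pdS : ∀ v p, fderiv ℝ S p v
      = 2 * H₂ p * fderiv ℝ H₂ p v + ε * (2 * H₁ p * fderiv ℝ H₁ p v) := by
    intro v p
    rw [hS]
    have e2 : ∀ q, H₂ q ^ 2 = H₂ q * H₂ q := fun q => sq (H₂ q)
    have e1 : ∀ q, H₁ q ^ 2 = H₁ q * H₁ q := fun q => sq (H₁ q)
    calc fderiv ℝ (fun q => H₂ q ^ 2 + ε * H₁ q ^ 2) p v
        = fderiv ℝ (fun q => H₂ q * H₂ q + ε * (H₁ q * H₁ q)) p v := by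
          simp only [sq]
      _ = fderiv ℝ (fun q => H₂ q * H₂ q) p v
            + fderiv ℝ (fun q => ε * (H₁ q * H₁ q)) p v :=
          pd_add (hd2.fun_mul hd2) (differentiable_const ε |>.fun_mul (hd1.fun_mul hd1))
      _ = 2 * H₂ p * fderiv ℝ H₂ p v + ε * (2 * H₁ p * fderiv ℝ H₁ p v) := by
          rw [pd_mul hd2 hd2, pd_const_mul ε (hd1.fun_mul hd1), pd_mul hd1 hd1]; ring
  have hθfun : θ = fun q => Real.sqrt (S q) := hθ
  have pdθ : ∀ v p, fderiv ℝ θ p v = fderiv ℝ S p v / (2 * θ p) := by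
    intro v p
    rw [hθfun, pd_sqrt hdS (hSne p)]
  -- key relation: θ·θ' = H₂²·L₂' + ε H₁²·L₁'
  have rel : ∀ v p, θ p * fderiv ℝ θ p v
      = H₂ p ^ 2 * fderiv ℝ L₂ p v + ε * H₁ p ^ 2 * fderiv ℝ L₁ p v := by
    intro v p
    rw [pdθ, pdS, pdL₁, pdL₂]
    field_simp [(hθpos p).ne', h1ne p, h2ne p]
  -- derivative of D and g
  have pdD : ∀ v p, fderiv ℝ D p v
      = Real.sqrt c * (fderiv ℝ H₁ p v * H₂ p + H₁ p * fderiv ℝ H₂ p v) := by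
    intro v p
    rw [hD]
    have : (fun q => Real.sqrt c * H₁ q * H₂ q)
        = fun q => (Real.sqrt c * H₁ q) * H₂ q := rfl
    rw [this, pd_mul ((differentiable_const _).fun_mul hd1) hd2,
      pd_const_mul _ hd1]
    ring
  have pdg : ∀ v p, fderiv ℝ g p v = -(g p) * (fderiv ℝ L₁ p v + fderiv ℝ L₂ p v) := by
    intro v p
    rw [hg]
    rw [pd_inv hdD (hDne p), pdD, pdL₁, pdL₂]
    rw [hD]
    field_simp [hsc.ne', h1ne p, h2ne p]
  -- derivative of φ
  have pdφ : ∀ v p, fderiv ℝ φ p v = fderiv ℝ θ p v * g p + θ p * fderiv ℝ g p v := by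
    intro v p
    rw [hφθg]
    exact pd_mul hdθ hdg
  -- unfold px/py in terms of fderiv
  have px_eq : ∀ f p, px f p = fderiv ℝ f p (1, 0) := fun _ _ => rfl
  have py_eq : ∀ f p, py f p = fderiv ℝ f p (0, 1) := fun _ _ => rfl
  -- second derivatives: pxy g, pxy φ, pxy (log (H₁ H₂))
  -- function-level identities
  have pygf : py g = fun q => -(g q) * (py L₁ q + py L₂ q) := by
    funext q; rw [py_eq]; rw [pdg]; rfl
  have pyφf : py φ = fun q => fderiv ℝ θ q (0,1) * g q + θ q * fderiv ℝ g q (0,1) := by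
    funext q; rw [py_eq, pdφ]
  have hdpyθ : Differentiable ℝ (fun q => fderiv ℝ θ q ((0:ℝ),(1:ℝ))) :=
    (contDiff_pd hθsm _).differentiable (by simp)
  have hdpyg : Differentiable ℝ (fun q => fderiv ℝ g q ((0:ℝ),(1:ℝ))) :=
    (contDiff_pd hgsm _).differentiable (by simp)
  have hdpyL₁ : Differentiable ℝ (fun q => fderiv ℝ L₁ q ((0:ℝ),(1:ℝ))) :=
    (contDiff_pd hL₁sm _).differentiable (by simp)
  have hdpyL₂ : Differentiable ℝ (fun q => fderiv ℝ L₂ q ((0:ℝ),(1:ℝ))) :=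
    (contDiff_pd hL₂sm _).differentiable (by simp)
  -- pxy g
  have pxyg : ∀ p, pxy g p
      = g p * ((px L₁ p + px L₂ p) * (py L₁ p + py L₂ p))
        - g p * (pxy L₁ p + pxy L₂ p) := by
    intro p
    have e1 : py g = fun q => (-(g q)) * (py L₁ q + py L₂ q) := pygf
    show px (py g) p = _
    rw [e1]
    have hneg : Differentiable ℝ (fun q => -(g q)) := hdg.neg
    have hsum : Differentiable ℝ (fun q => py L₁ q + py L₂ q) := by
      have : (fun q => py L₁ q + py L₂ q)
          = fun q => fderiv ℝ L₁ q (0,1) + fderiv ℝ L₂ q (0,1) := rfl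
      rw [this]; exact hdpyL₁.add hdpyL₂
    rw [px_eq, pd_mul hneg hsum]
    have h2 : fderiv ℝ (fun q => -(g q)) p (1,0) = -(fderiv ℝ g p (1,0)) := pd_neg
    have h3 : fderiv ℝ (fun q => py L₁ q + py L₂ q) p (1,0)
        = pxy L₁ p + pxy L₂ p := by
      have : (fun q => py L₁ q + py L₂ q)
          = fun q => fderiv ℝ L₁ q (0,1) + fderiv ℝ L₂ q (0,1) := rfl
      rw [this, pd_add hdpyL₁ hdpyL₂]; rfl
    rw [h2, h3, pdg]
    show -(-g p * (fderiv ℝ L₁ p (1,0) + fderiv ℝ L₂ p (1,0))) * (py L₁ p + py L₂ p)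
        + -g p * (pxy L₁ p + pxy L₂ p) = _
    have : fderiv ℝ L₁ p (1,0) = px L₁ p := rfl
    rw [this]
    have : fderiv ℝ L₂ p (1,0) = px L₂ p := rfl
    rw [this]
    ring
  -- pxy φ
  have pxyφ : ∀ p, pxy φ p
      = pxy θ p * g p + py θ p * px g p + px θ p * py g p + θ p * pxy g p := by
    intro p
    show px (py φ) p = _
    rw [pyφf, px_eq]
    rw [pd_add (hdpyθ.fun_mul hdg) (hdθ.fun_mul hdpyg)]
    rw [pd_mul hdpyθ hdg, pd_mul hdθ hdpyg]
    have e1 : fderiv ℝ (fun q => fderiv ℝ θ q (0,1)) p (1,0) = pxy θ p := rfl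
    have e2 : fderiv ℝ (fun q => fderiv ℝ g q (0,1)) p (1,0) = pxy g p := rfl
    rw [e1, e2]
    show pxy θ p * g p + py θ p * fderiv ℝ g p (1,0)
        + (fderiv ℝ θ p (1,0) * fderiv ℝ g p (0,1) + θ p * pxy g p) = _
    have e3 : fderiv ℝ g p (1,0) = px g p := rfl
    have e4 : fderiv ℝ θ p (1,0) = px θ p := rfl
    have e5 : fderiv ℝ g p (0,1) = py g p := rfl
    rw [e3, e4, e5]; ring
  -- pxy of log (H₁ H₂)
  have hlogmul : (fun q => Real.log (H₁ q * H₂ q)) = fun q => L₁ q + L₂ q := by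
    funext q; rw [hL₁, hL₂]; exact Real.log_mul (h1ne q) (h2ne q)
  have pxylog : ∀ p, pxy (fun q => Real.log (H₁ q * H₂ q)) p = pxy L₁ p + pxy L₂ p := by
    intro p
    rw [hlogmul]
    show px (py (fun q => L₁ q + L₂ q)) p = _
    have e1 : py (fun q => L₁ q + L₂ q)
        = fun q => fderiv ℝ L₁ q (0,1) + fderiv ℝ L₂ q (0,1) := by
      funext q; rw [py_eq, pd_add hdL₁ hdL₂]
    rw [e1, px_eq, pd_add hdpyL₁ hdpyL₂]
    rfl
  -- abbreviations at a point
  have main : ∀ p, pxy φ p + py L₁ p * px φ p + px L₂ p * py φ p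
      + φ p * pxy (fun q => Real.log (H₁ q * H₂ q)) p
      = g p * (pxy θ p - (py L₁ p * px θ p + px L₂ p * py θ p)) := by
    intro p
    have pxg : px g p = -(g p) * (px L₁ p + px L₂ p) := pdg _ p
    have pyg : py g p = -(g p) * (py L₁ p + py L₂ p) := pdg _ p
    have pxφ : px φ p = px θ p * g p + θ p * px g p := pdφ _ p
    have pyφ : py φ p = py θ p * g p + θ p * py g p := pdφ _ p
    have hφp : φ p = θ p * g p := by rw [hφθg]
    rw [pxylog, pxyφ p, pxyg p, pxφ, pyφ, hφp, pxg, pyg]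
    -- now pure algebra plus the relations
    have relx : θ p * px θ p = H₂ p ^ 2 * px L₂ p + ε * H₁ p ^ 2 * px L₁ p := rel _ p
    have rely : θ p * py θ p = H₂ p ^ 2 * py L₂ p + ε * H₁ p ^ 2 * py L₁ p := rel _ p
    have hsq : θ p ^ 2 = H₂ p ^ 2 + ε * H₁ p ^ 2 := hθsq p
    -- reduce to bracket identity
    have bracket : pxy θ p - py L₂ p * px θ p - px L₁ p * py θ p
        + θ p * (px L₁ p * py L₂ p - py L₁ p * px L₂ p)
        = pxy θ p - (py L₁ p * px θ p + px L₂ p * py θ p) := by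
      have hmul : θ p * (pxy θ p - py L₂ p * px θ p - px L₁ p * py θ p
          + θ p * (px L₁ p * py L₂ p - py L₁ p * px L₂ p))
          = θ p * (pxy θ p - (py L₁ p * px θ p + px L₂ p * py θ p)) := by
        have expand : θ p * (pxy θ p - py L₂ p * px θ p - px L₁ p * py θ p
            + θ p * (px L₁ p * py L₂ p - py L₁ p * px L₂ p))
            - θ p * (pxy θ p - (py L₁ p * px θ p + px L₂ p * py θ p))
            = (py L₁ p - py L₂ p) * (θ p * px θ p)
              + (px L₂ p - px L₁ p) * (θ p * py θ p)
              + (px L₁ p * py L₂ p - py L₁ p * px L₂ p) * θ p ^ 2 := by ring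
        have zero : (py L₁ p - py L₂ p) * (θ p * px θ p)
              + (px L₂ p - px L₁ p) * (θ p * py θ p)
              + (px L₁ p * py L₂ p - py L₁ p * px L₂ p) * θ p ^ 2 = 0 := by
          rw [relx, rely, hsq]; ring
        have := expand.trans zero
        linarith [this]
      exact mul_left_cancel₀ (hθpos p).ne' hmul
    calc pxy θ p * g p + py θ p * (-(g p) * (px L₁ p + px L₂ p))
          + px θ p * (-(g p) * (py L₁ p + py L₂ p))
          + θ p * (g p * ((px L₁ p + px L₂ p) * (py L₁ p + py L₂ p))
              - g p * (pxy L₁ p + pxy L₂ p))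
          + py L₁ p * (px θ p * g p + θ p * (-(g p) * (px L₁ p + px L₂ p)))
          + px L₂ p * (py θ p * g p + θ p * (-(g p) * (py L₁ p + py L₂ p)))
          + θ p * g p * (pxy L₁ p + pxy L₂ p)
        = g p * (pxy θ p - py L₂ p * px θ p - px L₁ p * py θ p
            + θ p * (px L₁ p * py L₂ p - py L₁ p * px L₂ p)) := by ring
      _ = g p * (pxy θ p - (py L₁ p * px θ p + px L₂ p * py θ p)) := by rw [bracket]
  -- finish
  have hgne : ∀ p, g p ≠ 0 := fun p => inv_ne_zero (hDne p)
  constructor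
  · intro h p
    have := h p
    rw [main p] at this
    have h0 : pxy θ p - (py L₁ p * px θ p + px L₂ p * py θ p) = 0 :=
      (mul_eq_zero.1 this).resolve_left (hgne p)
    have : pxy θ p = py L₁ p * px θ p + px L₂ p * py θ p := by linarith
    exact this
  · intro h p
    rw [main p, h p]
    ring
end

section
/- Let f be a G-surface with metric coefficients H₁, H₂, principal curvatures κ₁, κ₂ (all nonvanishing), and associated surface determined by functions h, l with δ ∈ {±1}, so that κ̂₁ = δκ₁/h, κ̂₂ = δκ₂/l and the G-condition (h-l)² = (H₂² + εH₁²)/(cH₁²H₂²) holds with c = 1. Define the dual curvatures κ₁* := δ̃δ·H₁²κ₁/(1 - h²H₁²) and κ₂* := δ̃δ·H₂²κ₂/(ε - l²H₂²) with δ̃ = δ. Then 1/(κ₁κ₂*) + 1/(κ₂κ₁*) = -2/(κ̂₁κ̂₂). -/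
/-!
Clearing the common factor `δ²κ₁κ₂`, the identity says
`(1 - h²H₁²)/H₁² + (ε - l²H₂²)/H₂² = -2hl`, i.e. `1/H₁² + ε/H₂² - h² - l² = -2hl`,
which is the G-condition `(h - l)² = 1/H₁² + ε/H₂²`. The clearing uses only
`(ab)⁻¹ = a⁻¹b⁻¹` and `a⁻¹⁻¹ = a`, which hold in a field even at zero.
-/

theorem dual_weights_sum_of_G_condition {K : Type*} [Field K] {H₁ H₂ h l ε : K}
    (hH₁ : H₁ ≠ 0) (hH₂ : H₂ ≠ 0)
    (hG : (h - l) ^ 2 = (H₂ ^ 2 + ε * H₁ ^ 2) / (H₁ ^ 2 * H₂ ^ 2)) :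
    (1 - h ^ 2 * H₁ ^ 2) / H₁ ^ 2 + (ε - l ^ 2 * H₂ ^ 2) / H₂ ^ 2 = -2 * h * l := by
  calc (1 - h ^ 2 * H₁ ^ 2) / H₁ ^ 2 + (ε - l ^ 2 * H₂ ^ 2) / H₂ ^ 2
      = (H₂ ^ 2 + ε * H₁ ^ 2) / (H₁ ^ 2 * H₂ ^ 2) - h ^ 2 - l ^ 2 := by field_simp; ring
    _ = -2 * h * l := by rw [← hG]; ring

theorem stmt_4_general (H₁ H₂ κ₁ κ₂ h l ε δ : ℝ)
    (hH₁ : 0 < H₁) (hH₂ : 0 < H₂)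
    (hG : (h - l) ^ 2 = (H₂ ^ 2 + ε * H₁ ^ 2) / (H₁ ^ 2 * H₂ ^ 2))
    (k1hat k2hat k1s k2s : ℝ)
    (h1 : k1hat = δ * κ₁ / h) (h2 : k2hat = δ * κ₂ / l)
    (h3 : k1s = δ * δ * (H₁ ^ 2 * κ₁) / (1 - h ^ 2 * H₁ ^ 2))
    (h4 : k2s = δ * δ * (H₂ ^ 2 * κ₂) / (ε - l ^ 2 * H₂ ^ 2)) :
    1 / (κ₁ * k2s) + 1 / (κ₂ * k1s) = -2 / (k1hat * k2hat) := by
  have hsum := dual_weights_sum_of_G_condition hH₁.ne' hH₂.ne' hG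
  subst h1 h2 h3 h4
  calc 1 / (κ₁ * (δ * δ * (H₂ ^ 2 * κ₂) / (ε - l ^ 2 * H₂ ^ 2)))
        + 1 / (κ₂ * (δ * δ * (H₁ ^ 2 * κ₁) / (1 - h ^ 2 * H₁ ^ 2)))
      = ((1 - h ^ 2 * H₁ ^ 2) / H₁ ^ 2 + (ε - l ^ 2 * H₂ ^ 2) / H₂ ^ 2) / (δ * δ * κ₁ * κ₂) := by
        simp only [div_eq_mul_inv, mul_inv, inv_inv]; ring
    _ = -2 / (δ * κ₁ / h * (δ * κ₂ / l)) := by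
        rw [hsum]; simp only [div_eq_mul_inv, mul_inv, inv_inv]; ring

/-- the dual surface of a G-surface satisfies the curvature relation
1/(κ₁κ₂*) + 1/(κ₂κ₁*) = -2/(k1hatk2hat). Stated pointwise. -/
theorem stmt_4 (H₁ H₂ κ₁ κ₂ h l ε δ : ℝ)
    (hH₁ : 0 < H₁) (hH₂ : 0 < H₂)
    (hκ₁ : κ₁ ≠ 0) (hκ₂ : κ₂ ≠ 0) (hh : h ≠ 0) (hl : l ≠ 0)
    (hδ : δ = 1 ∨ δ = -1)
    (hd1 : 1 - h ^ 2 * H₁ ^ 2 ≠ 0) (hd2 : ε - l ^ 2 * H₂ ^ 2 ≠ 0)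
    (hG : (h - l) ^ 2 = (H₂ ^ 2 + ε * H₁ ^ 2) / (H₁ ^ 2 * H₂ ^ 2))
    (k1hat k2hat k1s k2s : ℝ)
    (h1 : k1hat = δ * κ₁ / h) (h2 : k2hat = δ * κ₂ / l)
    (h3 : k1s = δ * δ * (H₁ ^ 2 * κ₁) / (1 - h ^ 2 * H₁ ^ 2))
    (h4 : k2s = δ * δ * (H₂ ^ 2 * κ₂) / (ε - l ^ 2 * H₂ ^ 2)) :
    1 / (κ₁ * k2s) + 1 / (κ₂ * k1s) = -2 / (k1hat * k2hat) :=
  stmt_4_general H₁ H₂ κ₁ κ₂ h l ε δ hH₁ hH₂ hG k1hat k2hat k1s k2s h1 h2 h3 h4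
end

section
/- Let h', l', h'', l'' : ℝ² → ℝ be smooth functions with h'l'' + l'h'' = -2 everywhere, and let Ĥ₁ be a smooth positive function. Assume the Combescure compatibility conditions ∂_y h' = (l'-h')∂_y ln Ĥ₁ and ∂_y h'' = (l''-h'')∂_y ln Ĥ₁. Then ∂_y(h'h'') = -2(1 + h'h'')∂_y ln Ĥ₁, and consequently (1 + h'h'')·Ĥ₁² is independent of y, i.e. h'h'' = -1 + ψ₁(x)/Ĥ₁² for some function ψ₁ of x alone. -/
lemma py_mul (f g : ℝ × ℝ → ℝ) (p : ℝ × ℝ) (hf : DifferentiableAt ℝ f p)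
    (hg : DifferentiableAt ℝ g p) :
    py (fun q => f q * g q) p = f p * py g p + g p * py f p := by
  simp [py, fderiv_fun_mul hf hg, mul_comm]

lemma py_log (H : ℝ × ℝ → ℝ) (p : ℝ × ℝ) (hH : DifferentiableAt ℝ H p)
    (hpos : 0 < H p) :
    py (fun q => Real.log (H q)) p = (H p)⁻¹ * py H p := by
  have h := (Real.hasDerivAt_log hpos.ne').comp_hasFDerivAt p hH.hasFDerivAt
  have h2 : fderiv ℝ (fun q => Real.log (H q)) p = (H p)⁻¹ • fderiv ℝ H p := h.fderiv
  simp [py, h2]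

/-- from h'l'' + l'h'' = -2 and the Combescure compatibility conditions,
∂_y(h'h'') = -2(1+h'h'')∂_y ln Ĥ₁, hence h'h'' = -1 + ψ₁(x)/Ĥ₁². -/
theorem stmt_5 (h' l' h'' l'' Hhat₁ : ℝ × ℝ → ℝ)
    (sh' : ContDiff ℝ (⊤ : ℕ∞) h') (sl' : ContDiff ℝ (⊤ : ℕ∞) l')
    (sh'' : ContDiff ℝ (⊤ : ℕ∞) h'') (sl'' : ContDiff ℝ (⊤ : ℕ∞) l'')
    (sH : ContDiff ℝ (⊤ : ℕ∞) Hhat₁) (hHpos : ∀ p, 0 < Hhat₁ p)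
    (hrel : ∀ p, h' p * l'' p + l' p * h'' p = -2)
    (compat' : ∀ p, py h' p = (l' p - h' p) * py (fun q => Real.log (Hhat₁ q)) p)
    (compat'' : ∀ p, py h'' p = (l'' p - h'' p) * py (fun q => Real.log (Hhat₁ q)) p) :
    (∀ p, py (fun q => h' q * h'' q) p
        = -2 * (1 + h' p * h'' p) * py (fun q => Real.log (Hhat₁ q)) p)
    ∧ ∃ ψ₁ : ℝ → ℝ, ∀ p, h' p * h'' p = -1 + ψ₁ p.1 / Hhat₁ p ^ 2 := by
  have dh' := sh'.differentiable (by simp)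
  have dh'' := sh''.differentiable (by simp)
  have dH := sH.differentiable (by simp)
  have key : ∀ p, py (fun q => h' q * h'' q) p
      = -2 * (1 + h' p * h'' p) * py (fun q => Real.log (Hhat₁ q)) p := by
    intro p
    rw [py_mul h' h'' p (dh' p) (dh'' p), compat' p, compat'' p]
    linear_combination py (fun q => Real.log (Hhat₁ q)) p * hrel p
  refine ⟨key, ?_⟩
  -- F is constant in y
  set F : ℝ × ℝ → ℝ := fun q => (1 + h' q * h'' q) * Hhat₁ q ^ 2 with hF
  have dF : Differentiable ℝ F :=
    ((differentiable_const 1).add (dh'.mul dh'')).mul (dH.pow 2)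
  have pyF : ∀ p, py F p = 0 := by
    intro p
    have h1 : py F p = (1 + h' p * h'' p) * py (fun q => Hhat₁ q ^ 2) p
        + Hhat₁ p ^ 2 * py (fun q => 1 + h' q * h'' q) p := by
      exact py_mul _ _ p ((differentiableAt_const 1).add ((dh' p).mul (dh'' p))) ((dH p).pow 2)
    have h2 : py (fun q => Hhat₁ q ^ 2) p = 2 * Hhat₁ p * py Hhat₁ p := by
      have : py (fun q => Hhat₁ q * Hhat₁ q) p = Hhat₁ p * py Hhat₁ p + Hhat₁ p * py Hhat₁ p :=
        py_mul _ _ p (dH p) (dH p)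
      simp only [pow_two]
      rw [this]; ring
    have h3 : py (fun q => 1 + h' q * h'' q) p = py (fun q => h' q * h'' q) p := by
      have : HasFDerivAt (fun q => 1 + h' q * h'' q)
          (fderiv ℝ (fun q => h' q * h'' q) p) p :=
        (((dh' p).mul (dh'' p)).hasFDerivAt).const_add 1
      simp [py, this.fderiv]
    rw [h1, h2, h3, key p, py_log Hhat₁ p (dH p) (hHpos p)]
    field_simp [(hHpos p).ne']
    ring
  -- F(x,y) = F(x,0)
  refine ⟨fun x => F (x, 0), fun p => ?_⟩
  have hconst : F p = F (p.1, 0) := by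
    have hφ : Differentiable ℝ (fun y : ℝ => F (p.1, y)) := by
      exact dF.comp ((differentiable_const p.1).prodMk differentiable_id)
    have hderiv : ∀ y : ℝ, deriv (fun y : ℝ => F (p.1, y)) y = 0 := by
      intro y
      have hc : HasDerivAt (fun y : ℝ => (p.1, y)) ((0 : ℝ), (1 : ℝ)) y :=
        (hasDerivAt_const y p.1).prodMk (hasDerivAt_id y)
      have hd : HasDerivAt (fun y : ℝ => F (p.1, y)) ((fderiv ℝ F (p.1, y)) (0, 1)) y :=
        ((dF (p.1, y)).hasFDerivAt).comp_hasDerivAt y hc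
      rw [hd.deriv]
      exact pyF (p.1, y)
    have := is_const_of_deriv_eq_zero hφ hderiv p.2 0
    simpa using this
  have hne : Hhat₁ p ^ 2 ≠ 0 := pow_ne_zero 2 (hHpos p).ne'
  have : (1 + h' p * h'' p) * Hhat₁ p ^ 2 = F (p.1, 0) := hconst
  field_simp
  rw [← this, mul_div_assoc, div_self hne]; ring
end

section
/- Let f be a G-surface with positive metric coefficients H₁, H₂, nonvanishing principal curvatures κ₁, κ₂, associated surface given by functions h, l satisfying the G-condition (h-l)² = (H₂² + εH₁²)/(H₁²H₂²), with κ̂₁ = κ₁/h, κ̂₂ = κ₂/l, and dual curvatures κ₁* = H₁²κ₁/(1 - h²H₁²), κ₂* = H₂²κ₂/(ε - l²H₂²). Then (1/κ₁ - 1/κ₂)(1/κ₁* - 1/κ₂*) = 1/(κ₁²H₁²) + ε/(κ₂²H₂²) - (1/κ̂₁ - 1/κ̂₂)². -/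
/-!
In the reciprocals `rᵢ = κᵢ⁻¹` every quantity becomes polynomial: `1/κ̂₁ = h r₁`,
`1/κ₁* = r₁ (1/H₁² - h²)`, `1/κ₂* = r₂ (ε/H₂² - l²)`. The two sides of the identity then differ
by `r₁ r₂ ((h - l)² - 1/H₁² - ε/H₂²)`, which is zero by the G-condition.
-/

theorem sub_mul_sub_eq_of_sq_sub_eq_add {R : Type*} [CommRing R] {a b h l : R}
    (hG : (h - l) ^ 2 = a + b) (r₁ r₂ : R) :
    (r₁ - r₂) * (r₁ * (a - h ^ 2) - r₂ * (b - l ^ 2))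
      = a * r₁ ^ 2 + b * r₂ ^ 2 - (h * r₁ - l * r₂) ^ 2 := by
  linear_combination (r₁ * r₂) * hG

theorem one_div_sq_mul_div_sub_sq_mul_sq {K : Type*} [Field K] {H : K} (hH : H ≠ 0)
    (κ c h : K) :
    1 / (H ^ 2 * κ / (c - h ^ 2 * H ^ 2)) = κ⁻¹ * (c / H ^ 2 - h ^ 2) := by
  rw [one_div_div]
  field_simp

theorem stmt_6_general (H₁ H₂ κ₁ κ₂ h l ε : ℝ)
    (hH₁ : 0 < H₁) (hH₂ : 0 < H₂)
    (hG : (h - l) ^ 2 = (H₂ ^ 2 + ε * H₁ ^ 2) / (H₁ ^ 2 * H₂ ^ 2))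
    (k1hat k2hat k1s k2s : ℝ)
    (h1 : k1hat = κ₁ / h) (h2 : k2hat = κ₂ / l)
    (h3 : k1s = H₁ ^ 2 * κ₁ / (1 - h ^ 2 * H₁ ^ 2))
    (h4 : k2s = H₂ ^ 2 * κ₂ / (ε - l ^ 2 * H₂ ^ 2)) :
    (1 / κ₁ - 1 / κ₂) * (1 / k1s - 1 / k2s)
      = 1 / (κ₁ ^ 2 * H₁ ^ 2) + ε / (κ₂ ^ 2 * H₂ ^ 2)
        - (1 / k1hat - 1 / k2hat) ^ 2 := by
  have hG' : (h - l) ^ 2 = 1 / H₁ ^ 2 + ε / H₂ ^ 2 := by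
    rw [hG]
    field_simp
  rw [h1, h2, h3, h4, one_div_sq_mul_div_sub_sq_mul_sq hH₁.ne',
    one_div_sq_mul_div_sub_sq_mul_sq hH₂.ne', one_div_div κ₁, one_div_div κ₂]
  convert sub_mul_sub_eq_of_sq_sub_eq_add hG' κ₁⁻¹ κ₂⁻¹ using 1 <;> ring

/-- identity relating the dual surface of a G-surface to Demoulin's
equation. Stated pointwise. -/
theorem stmt_6 (H₁ H₂ κ₁ κ₂ h l ε : ℝ)
    (hH₁ : 0 < H₁) (hH₂ : 0 < H₂)
    (hκ₁ : κ₁ ≠ 0) (hκ₂ : κ₂ ≠ 0) (hh : h ≠ 0) (hl : l ≠ 0)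
    (hd1 : 1 - h ^ 2 * H₁ ^ 2 ≠ 0) (hd2 : ε - l ^ 2 * H₂ ^ 2 ≠ 0)
    (hG : (h - l) ^ 2 = (H₂ ^ 2 + ε * H₁ ^ 2) / (H₁ ^ 2 * H₂ ^ 2))
    (k1hat k2hat k1s k2s : ℝ)
    (h1 : k1hat = κ₁ / h) (h2 : k2hat = κ₂ / l)
    (h3 : k1s = H₁ ^ 2 * κ₁ / (1 - h ^ 2 * H₁ ^ 2))
    (h4 : k2s = H₂ ^ 2 * κ₂ / (ε - l ^ 2 * H₂ ^ 2))
    (hk1s : k1s ≠ 0) (hk2s : k2s ≠ 0) :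
    (1 / κ₁ - 1 / κ₂) * (1 / k1s - 1 / k2s)
      = 1 / (κ₁ ^ 2 * H₁ ^ 2) + ε / (κ₂ ^ 2 * H₂ ^ 2)
        - (1 / k1hat - 1 / k2hat) ^ 2 :=
  stmt_6_general H₁ H₂ κ₁ κ₂ h l ε hH₁ hH₂ hG k1hat k2hat k1s k2s h1 h2 h3 h4
end

section
/- Under the hypotheses of the previous identity, the dual surface satisfies Demoulin's equation (1/κ₁ - 1/κ₂)(1/κ₁* - 1/κ₂*) = 1/(κ₁²H₁²) + ε/(κ₂²H₂²) if and only if lκ₁ - hκ₂ = 0, i.e. if and only if 1/κ̂₁ = 1/κ̂₂. -/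
/-! Once the G-condition is used to eliminate `ε`, the two sides of Demoulin's equation for the
dual pair differ by exactly `-((l κ₁ - h κ₂) / (κ₁ κ₂))²`, so the equation holds iff
`l κ₁ = h κ₂`, which is `h / κ₁ = l / κ₂`. -/

section DemoulinEquation

variable {K : Type*} [Field K] {H₁ H₂ κ₁ κ₂ h l ε : K}

theorem demoulin_sub_eq_neg_sq (hH₁ : H₁ ≠ 0) (hH₂ : H₂ ≠ 0) (hκ₁ : κ₁ ≠ 0) (hκ₂ : κ₂ ≠ 0)
    (hG : (h - l) ^ 2 * (H₁ ^ 2 * H₂ ^ 2) = H₂ ^ 2 + ε * H₁ ^ 2) :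
    (1 / κ₁ - 1 / κ₂) *
        (1 / (H₁ ^ 2 * κ₁ / (1 - h ^ 2 * H₁ ^ 2)) - 1 / (H₂ ^ 2 * κ₂ / (ε - l ^ 2 * H₂ ^ 2))) -
      (1 / (κ₁ ^ 2 * H₁ ^ 2) + ε / (κ₂ ^ 2 * H₂ ^ 2)) =
      -((l * κ₁ - h * κ₂) / (κ₁ * κ₂)) ^ 2 := by
  rw [one_div_div, one_div_div]
  field_simp
  linear_combination κ₁ * κ₂ * hG

theorem demoulin_iff (hH₁ : H₁ ≠ 0) (hH₂ : H₂ ≠ 0) (hκ₁ : κ₁ ≠ 0) (hκ₂ : κ₂ ≠ 0)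
    (hG : (h - l) ^ 2 * (H₁ ^ 2 * H₂ ^ 2) = H₂ ^ 2 + ε * H₁ ^ 2) :
    (1 / κ₁ - 1 / κ₂) *
        (1 / (H₁ ^ 2 * κ₁ / (1 - h ^ 2 * H₁ ^ 2)) - 1 / (H₂ ^ 2 * κ₂ / (ε - l ^ 2 * H₂ ^ 2))) =
      1 / (κ₁ ^ 2 * H₁ ^ 2) + ε / (κ₂ ^ 2 * H₂ ^ 2) ↔
    l * κ₁ - h * κ₂ = 0 := by
  rw [← sub_eq_zero, demoulin_sub_eq_neg_sq hH₁ hH₂ hκ₁ hκ₂ hG, neg_eq_zero,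
    pow_eq_zero_iff two_ne_zero, div_eq_zero_iff, or_iff_left (mul_ne_zero hκ₁ hκ₂)]

theorem one_div_div_eq_one_div_div_iff (hκ₁ : κ₁ ≠ 0) (hκ₂ : κ₂ ≠ 0) :
    1 / (κ₁ / h) = 1 / (κ₂ / l) ↔ l * κ₁ - h * κ₂ = 0 := by
  rw [one_div_div, one_div_div, div_eq_div_iff hκ₁ hκ₂, sub_eq_zero, mul_comm l, eq_comm]

end DemoulinEquation

theorem stmt_7_general (H₁ H₂ κ₁ κ₂ h l ε : ℝ)
    (hH₁ : 0 < H₁) (hH₂ : 0 < H₂)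
    (hκ₁ : κ₁ ≠ 0) (hκ₂ : κ₂ ≠ 0)
    (hG : (h - l) ^ 2 = (H₂ ^ 2 + ε * H₁ ^ 2) / (H₁ ^ 2 * H₂ ^ 2))
    (k1hat k2hat k1s k2s : ℝ)
    (h1 : k1hat = κ₁ / h) (h2 : k2hat = κ₂ / l)
    (h3 : k1s = H₁ ^ 2 * κ₁ / (1 - h ^ 2 * H₁ ^ 2))
    (h4 : k2s = H₂ ^ 2 * κ₂ / (ε - l ^ 2 * H₂ ^ 2)) :
    ((1 / κ₁ - 1 / κ₂) * (1 / k1s - 1 / k2s)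
        = 1 / (κ₁ ^ 2 * H₁ ^ 2) + ε / (κ₂ ^ 2 * H₂ ^ 2)
      ↔ l * κ₁ - h * κ₂ = 0)
    ∧ (l * κ₁ - h * κ₂ = 0 ↔ 1 / k1hat = 1 / k2hat) := by
  have hG' : (h - l) ^ 2 * (H₁ ^ 2 * H₂ ^ 2) = H₂ ^ 2 + ε * H₁ ^ 2 :=
    (eq_div_iff (by positivity)).1 hG
  subst h1 h2 h3 h4
  exact ⟨demoulin_iff hH₁.ne' hH₂.ne' hκ₁ hκ₂ hG', (one_div_div_eq_one_div_div_iff hκ₁ hκ₂).symm⟩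

/-- the dual surface of a G-surface satisfies Demoulin's equation
iff lκ₁ - hκ₂ = 0, i.e. iff 1/κ̂₁ = 1/κ̂₂. -/
theorem stmt_7 (H₁ H₂ κ₁ κ₂ h l ε : ℝ)
    (hH₁ : 0 < H₁) (hH₂ : 0 < H₂)
    (hκ₁ : κ₁ ≠ 0) (hκ₂ : κ₂ ≠ 0) (hh : h ≠ 0) (hl : l ≠ 0)
    (hd1 : 1 - h ^ 2 * H₁ ^ 2 ≠ 0) (hd2 : ε - l ^ 2 * H₂ ^ 2 ≠ 0)
    (hG : (h - l) ^ 2 = (H₂ ^ 2 + ε * H₁ ^ 2) / (H₁ ^ 2 * H₂ ^ 2))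
    (k1hat k2hat k1s k2s : ℝ)
    (h1 : k1hat = κ₁ / h) (h2 : k2hat = κ₂ / l)
    (h3 : k1s = H₁ ^ 2 * κ₁ / (1 - h ^ 2 * H₁ ^ 2))
    (h4 : k2s = H₂ ^ 2 * κ₂ / (ε - l ^ 2 * H₂ ^ 2))
    (hk1s : k1s ≠ 0) (hk2s : k2s ≠ 0) :
    ((1 / κ₁ - 1 / κ₂) * (1 / k1s - 1 / k2s)
        = 1 / (κ₁ ^ 2 * H₁ ^ 2) + ε / (κ₂ ^ 2 * H₂ ^ 2)
      ↔ l * κ₁ - h * κ₂ = 0)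
    ∧ (l * κ₁ - h * κ₂ = 0 ↔ 1 / k1hat = 1 / k2hat) :=
  stmt_7_general H₁ H₂ κ₁ κ₂ h l ε hH₁ hH₂ hκ₁ hκ₂ hG k1hat k2hat k1s k2s h1 h2 h3 h4
end

section
/- Let H₁, H₂, H₃ be positive functions and h₁, h₂, h₃ functions such that, setting Ĥᵢ := hᵢHᵢ, the relations H_i Ĥ_j - H_j Ĥ_i = ε_k H_k hold for all cyclic permutations (i,j,k) of (1,2,3), where (ε₁,ε₂,ε₃) = (1,1,-1). Then H₁² + H₂² - H₃² = 0, i.e. the system is a Guichard net. -/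
theorem sq_add_sq_sub_sq_eq_zero_of_combescure_relations {R : Type*} [CommRing R]
    {H₁ H₂ H₃ h₁ h₂ h₃ : R}
    (r₁ : H₁ * (h₂ * H₂) - H₂ * (h₁ * H₁) = -H₃)
    (r₂ : H₂ * (h₃ * H₃) - H₃ * (h₂ * H₂) = H₁)
    (r₃ : H₃ * (h₁ * H₁) - H₁ * (h₃ * H₃) = H₂) :
    H₁ ^ 2 + H₂ ^ 2 - H₃ ^ 2 = 0 := by
  linear_combination -(H₃ * r₁ + H₁ * r₂ + H₂ * r₃)

theorem stmt_11_general (H₁ H₂ H₃ h₁ h₂ h₃ : EuclideanSpace ℝ (Fin 3) → ℝ)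
    (r₁ : ∀ p, H₁ p * (h₂ p * H₂ p) - H₂ p * (h₁ p * H₁ p) = -(H₃ p))
    (r₂ : ∀ p, H₂ p * (h₃ p * H₃ p) - H₃ p * (h₂ p * H₂ p) = H₁ p)
    (r₃ : ∀ p, H₃ p * (h₁ p * H₁ p) - H₁ p * (h₃ p * H₃ p) = H₂ p) :
    ∀ p, H₁ p ^ 2 + H₂ p ^ 2 - H₃ p ^ 2 = 0 := fun p =>
  sq_add_sq_sub_sq_eq_zero_of_combescure_relations (r₁ p) (r₂ p) (r₃ p)

/-- if a Combescure transform satisfies H_iĤ_j - H_jĤ_i = ε_k H_k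
for all cyclic (i,j,k), then the system is a Guichard net. -/
theorem stmt_11 (H₁ H₂ H₃ h₁ h₂ h₃ : EuclideanSpace ℝ (Fin 3) → ℝ)
    (hpos : ∀ p, 0 < H₁ p ∧ 0 < H₂ p ∧ 0 < H₃ p)
    (r₁ : ∀ p, H₁ p * (h₂ p * H₂ p) - H₂ p * (h₁ p * H₁ p) = -(H₃ p))
    (r₂ : ∀ p, H₂ p * (h₃ p * H₃ p) - H₃ p * (h₂ p * H₂ p) = H₁ p)
    (r₃ : ∀ p, H₃ p * (h₁ p * H₁ p) - H₁ p * (h₃ p * H₃ p) = H₂ p) :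
    ∀ p, H₁ p ^ 2 + H₂ p ^ 2 - H₃ p ^ 2 = 0 :=
  stmt_11_general H₁ H₂ H₃ h₁ h₂ h₃ r₁ r₂ r₃
end

section
/- Let H₁, H₂, H₃ be positive functions with H₁² + H₂² - H₃² = 0, let h₁, h₂, h₃ satisfy h_i = h_k + ε_j H_j/(H_iH_k) and h_j = h_k - ε_i H_i/(H_jH_k) for each cyclic permutation (i,j,k) of (1,2,3), with (ε₁,ε₂,ε₃)=(1,1,-1). Define Ĥᵢ := hᵢHᵢ and Hᵢ* := (-hᵢ² + εᵢ/Hᵢ²)Hᵢ. Then for all cyclic (i,j,k): Hᵢ*Ĥⱼ - Hⱼ*Ĥᵢ = -ε_k H_k*. Consequently the dual system satisfies the characterization of Guichard nets (with respect to the Combescure transform given by -h₁,-h₂,-h₃), i.e. H₁*² + H₂*² - H₃*² = 0. -/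
/-!
Eliminating `hᵢ` and `hⱼ` through the relations with `hₖ` turns `Hᵢ* Ĥⱼ - Hⱼ* Ĥᵢ + εₖ Hₖ*` into a
polynomial in `hₖ` whose coefficients vanish because `εᵢ εⱼ εₖ = -1` and `εᵢ² = εⱼ² = 1`.
The three identities say that the cross product `H* × Ĥ` equals `-(ε₁ H₁*, ε₂ H₂*, ε₃ H₃*)`;
its scalar product with `H*` vanishes, which is the Guichard condition for `H*`.
-/

noncomputable def dualLame (ε H h : ℝ) : ℝ := (-h ^ 2 + ε / H ^ 2) * H

theorem dualLame_mul_sub_dualLame_mul {εᵢ εⱼ εₖ Hᵢ Hⱼ Hₖ hᵢ hⱼ hₖ : ℝ}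
    (hεᵢ : εᵢ ^ 2 = 1) (hεⱼ : εⱼ ^ 2 = 1) (hε : εᵢ * εⱼ * εₖ = -1)
    (hHᵢ : Hᵢ ≠ 0) (hHⱼ : Hⱼ ≠ 0) (hHₖ : Hₖ ≠ 0)
    (hij : hⱼ - hᵢ = εₖ * Hₖ / (Hᵢ * Hⱼ)) (hki : hᵢ - hₖ = εⱼ * Hⱼ / (Hₖ * Hᵢ))
    (hjk : hₖ - hⱼ = εᵢ * Hᵢ / (Hⱼ * Hₖ)) :
    dualLame εᵢ Hᵢ hᵢ * (hⱼ * Hⱼ) - dualLame εⱼ Hⱼ hⱼ * (hᵢ * Hᵢ)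
      = -(εₖ * dualLame εₖ Hₖ hₖ) := by
  have hεₖ : εₖ = -(εᵢ * εⱼ) := by
    linear_combination (-εₖ * εⱼ ^ 2) * hεᵢ - εₖ * hεⱼ + εᵢ * εⱼ * hε
  obtain rfl : hᵢ = hₖ + εⱼ * Hⱼ / (Hₖ * Hᵢ) := by linear_combination hki
  obtain rfl : hⱼ = hₖ - εᵢ * Hᵢ / (Hⱼ * Hₖ) := by linear_combination -hjk
  subst hεₖ
  unfold dualLame
  linear_combination (norm := (field_simp; ring))
    Hᵢ * Hⱼ * (hₖ + εⱼ * Hⱼ / (Hₖ * Hᵢ)) * (hₖ - εᵢ * Hᵢ / (Hⱼ * Hₖ)) * hij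
    + (-(hₖ * εᵢ * Hⱼ / Hᵢ) + εᵢ ^ 2 / Hₖ) * hεⱼ + (hₖ * εⱼ * Hᵢ / Hⱼ + εⱼ ^ 2 / Hₖ) * hεᵢ

theorem sq_add_sq_sub_sq_eq_zero_of_cross {R : Type*} [CommRing R] {x₁ x₂ x₃ y₁ y₂ y₃ : R}
    (h₃ : x₁ * y₂ - x₂ * y₁ = x₃) (h₁ : x₂ * y₃ - x₃ * y₂ = -x₁) (h₂ : x₃ * y₁ - x₁ * y₃ = -x₂) :
    x₁ ^ 2 + x₂ ^ 2 - x₃ ^ 2 = 0 := by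
  linear_combination x₃ * h₃ + x₁ * h₁ + x₂ * h₂

theorem stmt_12_general (H₁ H₂ H₃ h₁ h₂ h₃ : EuclideanSpace ℝ (Fin 3) → ℝ)
    (hpos : ∀ p, 0 < H₁ p ∧ 0 < H₂ p ∧ 0 < H₃ p)
    (r₁ : ∀ p, h₁ p - h₃ p = H₂ p / (H₁ p * H₃ p))
    (r₂ : ∀ p, h₂ p - h₃ p = -(H₁ p / (H₂ p * H₃ p)))
    (r₃ : ∀ p, h₂ p - h₁ p = -(H₃ p / (H₁ p * H₂ p)))
    (Hh₁ Hh₂ Hh₃ Hs₁ Hs₂ Hs₃ : EuclideanSpace ℝ (Fin 3) → ℝ)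
    (e₁ : ∀ p, Hh₁ p = h₁ p * H₁ p) (e₂ : ∀ p, Hh₂ p = h₂ p * H₂ p)
    (e₃ : ∀ p, Hh₃ p = h₃ p * H₃ p)
    (s₁ : ∀ p, Hs₁ p = (-(h₁ p ^ 2) + 1 / H₁ p ^ 2) * H₁ p)
    (s₂ : ∀ p, Hs₂ p = (-(h₂ p ^ 2) + 1 / H₂ p ^ 2) * H₂ p)
    (s₃ : ∀ p, Hs₃ p = (-(h₃ p ^ 2) + (-1) / H₃ p ^ 2) * H₃ p) :
    ∀ p,
      Hs₁ p * Hh₂ p - Hs₂ p * Hh₁ p = Hs₃ p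
      ∧ Hs₂ p * Hh₃ p - Hs₃ p * Hh₂ p = -(Hs₁ p)
      ∧ Hs₃ p * Hh₁ p - Hs₁ p * Hh₃ p = -(Hs₂ p)
      ∧ Hs₁ p ^ 2 + Hs₂ p ^ 2 - Hs₃ p ^ 2 = 0 := by
  intro p
  obtain ⟨hH₁, hH₂, hH₃⟩ := hpos p
  have d₁₂ : h₂ p - h₁ p = -1 * H₃ p / (H₁ p * H₂ p) := by linear_combination r₃ p
  have d₂₃ : h₃ p - h₂ p = 1 * H₁ p / (H₂ p * H₃ p) := by linear_combination -r₂ p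
  have d₃₁ : h₁ p - h₃ p = 1 * H₂ p / (H₃ p * H₁ p) := by linear_combination r₁ p
  have c₃ := dualLame_mul_sub_dualLame_mul (by norm_num) (by norm_num) (by norm_num)
    hH₁.ne' hH₂.ne' hH₃.ne' d₁₂ d₃₁ d₂₃
  have c₁ := dualLame_mul_sub_dualLame_mul (by norm_num) (by norm_num) (by norm_num)
    hH₂.ne' hH₃.ne' hH₁.ne' d₂₃ d₁₂ d₃₁
  have c₂ := dualLame_mul_sub_dualLame_mul (by norm_num) (by norm_num) (by norm_num)
    hH₃.ne' hH₁.ne' hH₂.ne' d₃₁ d₂₃ d₁₂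
  have s₁' : Hs₁ p = dualLame 1 (H₁ p) (h₁ p) := s₁ p
  have s₂' : Hs₂ p = dualLame 1 (H₂ p) (h₂ p) := s₂ p
  have s₃' : Hs₃ p = dualLame (-1) (H₃ p) (h₃ p) := s₃ p
  simp only [← s₁', ← s₂', ← s₃', ← e₁ p, ← e₂ p, ← e₃ p] at c₁ c₂ c₃
  have k₃ : Hs₁ p * Hh₂ p - Hs₂ p * Hh₁ p = Hs₃ p := by linear_combination c₃
  have k₁ : Hs₂ p * Hh₃ p - Hs₃ p * Hh₂ p = -(Hs₁ p) := by linear_combination c₁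
  have k₂ : Hs₃ p * Hh₁ p - Hs₁ p * Hh₃ p = -(Hs₂ p) := by linear_combination c₂
  exact ⟨k₃, k₁, k₂, sq_add_sq_sub_sq_eq_zero_of_cross k₃ k₁ k₂⟩

/-- the dual system of a Guichard net is again a Guichard net. -/
theorem stmt_12 (H₁ H₂ H₃ h₁ h₂ h₃ : EuclideanSpace ℝ (Fin 3) → ℝ)
    (hpos : ∀ p, 0 < H₁ p ∧ 0 < H₂ p ∧ 0 < H₃ p)
    (hGuichard : ∀ p, H₁ p ^ 2 + H₂ p ^ 2 - H₃ p ^ 2 = 0)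
    (r₁ : ∀ p, h₁ p - h₃ p = H₂ p / (H₁ p * H₃ p))
    (r₂ : ∀ p, h₂ p - h₃ p = -(H₁ p / (H₂ p * H₃ p)))
    (r₃ : ∀ p, h₂ p - h₁ p = -(H₃ p / (H₁ p * H₂ p)))
    (Hh₁ Hh₂ Hh₃ Hs₁ Hs₂ Hs₃ : EuclideanSpace ℝ (Fin 3) → ℝ)
    (e₁ : ∀ p, Hh₁ p = h₁ p * H₁ p) (e₂ : ∀ p, Hh₂ p = h₂ p * H₂ p)
    (e₃ : ∀ p, Hh₃ p = h₃ p * H₃ p)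
    (s₁ : ∀ p, Hs₁ p = (-(h₁ p ^ 2) + 1 / H₁ p ^ 2) * H₁ p)
    (s₂ : ∀ p, Hs₂ p = (-(h₂ p ^ 2) + 1 / H₂ p ^ 2) * H₂ p)
    (s₃ : ∀ p, Hs₃ p = (-(h₃ p ^ 2) + (-1) / H₃ p ^ 2) * H₃ p) :
    ∀ p,
      Hs₁ p * Hh₂ p - Hs₂ p * Hh₁ p = Hs₃ p
      ∧ Hs₂ p * Hh₃ p - Hs₃ p * Hh₂ p = -(Hs₁ p)
      ∧ Hs₃ p * Hh₁ p - Hs₁ p * Hh₃ p = -(Hs₂ p)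
      ∧ Hs₁ p ^ 2 + Hs₂ p ^ 2 - Hs₃ p ^ 2 = 0 :=
  stmt_12_general H₁ H₂ H₃ h₁ h₂ h₃ hpos r₁ r₂ r₃ Hh₁ Hh₂ Hh₃ Hs₁ Hs₂ Hs₃ e₁ e₂ e₃ s₁ s₂ s₃
end

section
/- Let H₁, H₂, H₃ be positive functions with H₁² + H₂² - H₃² = 0 (Guichard net) and let H̄₁, H̄₂, H̄₃, A be functions with H̄₁² + H̄₂² - H̄₃² = α²A, A > 0, and α ≠ 0. Define φ_λ := (1/α²)(H₁H̄₁ + H₂H̄₂ - H₃H̄₃) + λ and R(Hᵢ) := Hᵢ - (2φ_λ/A)H̄ᵢ. Then R(H₁)² + R(H₂)² - R(H₃)² = (4α²λ/A)·φ_λ. In particular, R(H₁)² + R(H₂)² - R(H₃)² = 0 identically for λ = 0, so the induced Ribaucour transform with λ = 0 is again a Guichard net. -/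
/-!
Write `Q(x) = x₁² + x₂² - x₃²` with polar form `B`. Each Lamé coefficient of the transform is
`Hᵢ - t H̄ᵢ` with `t = 2φ_λ / A`, so `Q(R(H)) = Q(H) - 2t B(H, H̄) + t² Q(H̄)`. Here `Q(H) = 0`,
`Q(H̄) = α²A` and, by the definition of `φ_λ`, `B(H, H̄) = α²(φ_λ - λ)`; the `φ_λ²` terms cancel
and `4α²λφ_λ / A` remains.
-/

theorem lorentz_sq_sub_mul {R : Type*} [CommRing R] (x₁ x₂ x₃ y₁ y₂ y₃ t : R) :
    (x₁ - t * y₁) ^ 2 + (x₂ - t * y₂) ^ 2 - (x₃ - t * y₃) ^ 2 =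
      (x₁ ^ 2 + x₂ ^ 2 - x₃ ^ 2) - 2 * t * (x₁ * y₁ + x₂ * y₂ - x₃ * y₃)
        + t ^ 2 * (y₁ ^ 2 + y₂ ^ 2 - y₃ ^ 2) := by
  ring

theorem ribaucour_lorentz_sq {K : Type*} [Field K] {H₁ H₂ H₃ Hb₁ Hb₂ Hb₃ A α lam φ : K}
    (hα : α ≠ 0) (hA : A ≠ 0) (hG : H₁ ^ 2 + H₂ ^ 2 - H₃ ^ 2 = 0)
    (hbar : Hb₁ ^ 2 + Hb₂ ^ 2 - Hb₃ ^ 2 = α ^ 2 * A)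
    (hφ : φ = (1 / α ^ 2) * (H₁ * Hb₁ + H₂ * Hb₂ - H₃ * Hb₃) + lam) :
    (H₁ - (2 * φ / A) * Hb₁) ^ 2 + (H₂ - (2 * φ / A) * Hb₂) ^ 2 - (H₃ - (2 * φ / A) * Hb₃) ^ 2 =
      (4 * α ^ 2 * lam / A) * φ := by
  have hB : H₁ * Hb₁ + H₂ * Hb₂ - H₃ * Hb₃ = α ^ 2 * (φ - lam) := by
    rw [hφ]
    field_simp
    ring
  rw [lorentz_sq_sub_mul, hG, hB, hbar]
  field_simp
  ring

theorem stmt_13_general (H₁ H₂ H₃ Hb₁ Hb₂ Hb₃ A : EuclideanSpace ℝ (Fin 3) → ℝ)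
    (α lam : ℝ) (hα : α ≠ 0) (hA : ∀ p, 0 < A p)
    (hGuichard : ∀ p, H₁ p ^ 2 + H₂ p ^ 2 - H₃ p ^ 2 = 0)
    (hbar : ∀ p, Hb₁ p ^ 2 + Hb₂ p ^ 2 - Hb₃ p ^ 2 = α ^ 2 * A p)
    (φ : EuclideanSpace ℝ (Fin 3) → ℝ)
    (hφ : ∀ p, φ p = (1 / α ^ 2) * (H₁ p * Hb₁ p + H₂ p * Hb₂ p - H₃ p * Hb₃ p) + lam)
    (R₁ R₂ R₃ : EuclideanSpace ℝ (Fin 3) → ℝ)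
    (hR₁ : ∀ p, R₁ p = H₁ p - (2 * φ p / A p) * Hb₁ p)
    (hR₂ : ∀ p, R₂ p = H₂ p - (2 * φ p / A p) * Hb₂ p)
    (hR₃ : ∀ p, R₃ p = H₃ p - (2 * φ p / A p) * Hb₃ p) :
    (∀ p, R₁ p ^ 2 + R₂ p ^ 2 - R₃ p ^ 2 = (4 * α ^ 2 * lam / A p) * φ p)
    ∧ (lam = 0 → ∀ p, R₁ p ^ 2 + R₂ p ^ 2 - R₃ p ^ 2 = 0) := by
  have key : ∀ p, R₁ p ^ 2 + R₂ p ^ 2 - R₃ p ^ 2 = (4 * α ^ 2 * lam / A p) * φ p := fun p => by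
    rw [hR₁ p, hR₂ p, hR₃ p]
    exact ribaucour_lorentz_sq hα (hA p).ne' (hGuichard p) (hbar p) (hφ p)
  refine ⟨key, fun hlam p => ?_⟩
  rw [key p, hlam]
  ring

/-- the induced Ribaucour transform with λ = 0 of a Guichard net is
again a Guichard net. Pointwise algebraic identity. -/
theorem stmt_13 (H₁ H₂ H₃ Hb₁ Hb₂ Hb₃ A : EuclideanSpace ℝ (Fin 3) → ℝ)
    (α lam : ℝ) (hα : α ≠ 0) (hA : ∀ p, 0 < A p)
    (hpos : ∀ p, 0 < H₁ p ∧ 0 < H₂ p ∧ 0 < H₃ p)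
    (hGuichard : ∀ p, H₁ p ^ 2 + H₂ p ^ 2 - H₃ p ^ 2 = 0)
    (hbar : ∀ p, Hb₁ p ^ 2 + Hb₂ p ^ 2 - Hb₃ p ^ 2 = α ^ 2 * A p)
    (φ : EuclideanSpace ℝ (Fin 3) → ℝ)
    (hφ : ∀ p, φ p = (1 / α ^ 2) * (H₁ p * Hb₁ p + H₂ p * Hb₂ p - H₃ p * Hb₃ p) + lam)
    (R₁ R₂ R₃ : EuclideanSpace ℝ (Fin 3) → ℝ)
    (hR₁ : ∀ p, R₁ p = H₁ p - (2 * φ p / A p) * Hb₁ p)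
    (hR₂ : ∀ p, R₂ p = H₂ p - (2 * φ p / A p) * Hb₂ p)
    (hR₃ : ∀ p, R₃ p = H₃ p - (2 * φ p / A p) * Hb₃ p) :
    (∀ p, R₁ p ^ 2 + R₂ p ^ 2 - R₃ p ^ 2 = (4 * α ^ 2 * lam / A p) * φ p)
    ∧ (lam = 0 → ∀ p, R₁ p ^ 2 + R₂ p ^ 2 - R₃ p ^ 2 = 0) :=
  stmt_13_general H₁ H₂ H₃ Hb₁ Hb₂ Hb₃ A α lam hα hA hGuichard hbar φ hφ R₁ R₂ R₃ hR₁ hR₂ hR₃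
end
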